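/- The conditional expectation 𝔼_X^Λ maps the even subalgebra onto the even local subalgebra: for finite X ⊆ Λ ⊆ Γ, one has 𝔼_X^Λ(A) ∈ 𝔄_X⁺ for every A ∈ 𝔄_Λ⁺, and 𝔼_X^Λ(A) = A for every A ∈ 𝔄_X⁺; hence 𝔼_X^Λ(𝔄_Λ⁺) = 𝔄_X⁺. -/

import Mathlib

open scoped Classical

/-- The canonical anticommutation relations for a family `a x` of annihilation
operators in a C*-algebra. -/
def IsCAR {Γ A : Type*} [Ring A] [StarRing A] (a : Γ → A) : Prop :=
  (∀ x y, a x * a y + a y * a x = 0) ∧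
  (∀ x y, star (a x) * star (a y) + star (a y) * star (a x) = 0) ∧
  (∀ x y, a x * star (a y) + star (a y) * a x = if x = y then (1 : A) else 0)

/-- The four possible factors of a monomial at a site `x`:
`1`, `a x`, `a x *`, and `a x * a x`. -/
def carFactor {Γ A : Type*} [Ring A] [StarRing A] (a : Γ → A) (k : Fin 4) (x : Γ) : A :=
  match k with
  | 0 => 1
  | 1 => a x
  | 2 => star (a x)
  | 3 => star (a x) * a x

/-- The monomial with factor pattern `k` along the enumeration `l` of a finite set of sites. -/
def carMonomial {Γ A : Type*} [Ring A] [StarRing A] (a : Γ → A) (l : List Γ)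
    (k : Γ → Fin 4) : A :=
  (l.map fun x => carFactor a (k x) x).prod

/-- The number of odd factors (`a x` or `a x *`) of the monomial with pattern `k` along `l`. -/
def carOddCount {Γ : Type*} (l : List Γ) (k : Γ → Fin 4) : ℕ :=
  l.countP fun x => decide (k x = 1 ∨ k x = 2)

/-- `𝔄_X`: the linear span of the monomials supported in the finite set `X`. -/
def carSpan {Γ A : Type*} [Ring A] [StarRing A] [Algebra ℂ A] (a : Γ → A) (X : Finset Γ) :
    Submodule ℂ A :=
  Submodule.span ℂ {m | ∃ (l : List Γ) (k : Γ → Fin 4),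
    l.Nodup ∧ l.toFinset = X ∧ m = carMonomial a l k}

/-- `𝔄_X⁺`: the linear span of the even monomials supported in the finite set `X`. -/
def carSpanEven {Γ A : Type*} [Ring A] [StarRing A] [Algebra ℂ A] (a : Γ → A) (X : Finset Γ) :
    Submodule ℂ A :=
  Submodule.span ℂ {m | ∃ (l : List Γ) (k : Γ → Fin 4),
    l.Nodup ∧ l.toFinset = X ∧ Even (carOddCount l k) ∧ m = carMonomial a l k}

/-- The single-site unitaries `u_x^(0) = 1`, `u_x^(1) = a_x* + a_x`, `u_x^(2) = a_x* − a_x`,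
`u_x^(3) = 1 − 2 a_x* a_x`. -/
def uFactor {Γ A : Type*} [Ring A] [StarRing A] (a : Γ → A) (k : Fin 4) (x : Γ) : A :=
  match k with
  | 0 => 1
  | 1 => star (a x) + a x
  | 2 => star (a x) - a x
  | 3 => 1 - 2 * (star (a x) * a x)

/-- The unitary `u(α) = u_{x_1}^{(α(x_1))} ⋯ u_{x_n}^{(α(x_n))}` along the enumeration `l`
of `Λ ∖ X`. -/
def uProd {Γ A : Type*} [Ring A] [StarRing A] (a : Γ → A) (l : List Γ)
    (α : Fin l.length → Fin 4) : A :=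
  (List.ofFn fun i => uFactor a (α i) (l.get i)).prod

/-- The conditional expectation `𝔼_X^Λ(B) = 4^{−|Λ∖X|} ∑_{α} u(α)* B u(α)`, where `l` is
an enumeration of `Λ ∖ X`. -/
noncomputable def condExp {Γ A : Type*} [Ring A] [StarRing A] [Algebra ℂ A] (a : Γ → A)
    (l : List Γ) (B : A) : A :=
  ((4 : ℂ) ^ l.length)⁻¹ • ∑ α : Fin l.length → Fin 4, star (uProd a l α) * B * uProd a l α


/-! The expectation `𝔼_X^Λ` is the composite of the single-site averages
`𝔼_y(B) = ¼ ∑ⱼ u_y^(j)* B u_y^(j)` over `y ∈ Λ ∖ X`, and with `n = a_y* a_y`,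
`𝔼_y(B) = ½ (n B n + (1 - n) B (1 - n) + a_y* B a_y + a_y B a_y*)`.
A monomial not involving `y` passes `a_y` and `a_y*` with the sign `(-1)^(number of odd factors)`.
Hence an even element of `𝔄_X` commutes with `a_y`, `a_y*` for `y ∉ X` and is fixed by `𝔼_y`;
and for an even monomial `M₁ F M₂` whose factor at `y` is `F`, the signs of `M₁` and `M₂`
multiply to that of `F`, which gives `𝔼_y(M₁ F M₂) = τ(F) M₁ M₂` for the normalized trace
`τ` of the site. Removing the sites of `Λ ∖ X` one at a time thus maps `𝔄_Λ⁺` into `𝔄_X⁺`,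
and `𝔄_X⁺ ⊆ 𝔄_Λ⁺` gives surjectivity. -/

section SignedCommutation

variable {R : Type*} [Ring R]

theorem mul_eq_neg_one_pow_smul_symm {x y : R} {n : ℕ} (h : x * y = (-1 : ℤ) ^ n • (y * x)) :
    y * x = (-1 : ℤ) ^ n • (x * y) := by
  rw [h, smul_smul, ← pow_add, Even.neg_one_pow ⟨n, rfl⟩, one_smul]

theorem mul_mul_eq_neg_one_pow_smul {z x w : R} {m n : ℕ}
    (hx : z * x = (-1 : ℤ) ^ m • (x * z)) (hw : z * w = (-1 : ℤ) ^ n • (w * z)) :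
    z * (x * w) = (-1 : ℤ) ^ (m + n) • (x * w * z) := by
  rw [← mul_assoc, hx, smul_mul_assoc, mul_assoc, hw, mul_smul_comm, smul_smul, ← pow_add,
    mul_assoc]

theorem commute_mul_of_neg_one_pow_smul {s t M : R} {n : ℕ}
    (hs : s * M = (-1 : ℤ) ^ n • (M * s)) (ht : t * M = (-1 : ℤ) ^ n • (M * t)) :
    Commute (s * t) M := by
  rw [Commute, SemiconjBy, mul_assoc, ht, mul_smul_comm, ← mul_assoc, hs, smul_mul_assoc,
    smul_smul, ← pow_add, Even.neg_one_pow ⟨n, rfl⟩, one_smul, mul_assoc]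

theorem mul_mul_mul_eq_neg_one_pow_smul {s t M₁ F M₂ : R} {m n : ℕ}
    (h₁ : s * M₁ = (-1 : ℤ) ^ m • (M₁ * s)) (h₂ : t * M₂ = (-1 : ℤ) ^ n • (M₂ * t)) :
    s * (M₁ * F * M₂) * t = (-1 : ℤ) ^ (m + n) • (M₁ * (s * F * t) * M₂) := by
  calc s * (M₁ * F * M₂) * t = s * M₁ * F * (M₂ * t) := by simp only [mul_assoc]
    _ = _ := by
      rw [h₁, mul_eq_neg_one_pow_smul_symm h₂]
      simp only [smul_mul_assoc, mul_smul_comm, smul_smul, pow_add, mul_assoc, mul_comm]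

end SignedCommutation

section Monomials

variable {Γ A : Type*} [Ring A] [StarRing A] {a : Γ → A}

def carFactorDegree (j : Fin 4) : ℕ := if j = 1 ∨ j = 2 then 1 else 0

variable (a) in
theorem carMonomial_cons (x : Γ) (l : List Γ) (k : Γ → Fin 4) :
    carMonomial a (x :: l) k = carFactor a (k x) x * carMonomial a l k :=
  List.prod_cons

variable (a) in
theorem carMonomial_append (l₁ l₂ : List Γ) (k : Γ → Fin 4) :
    carMonomial a (l₁ ++ l₂) k = carMonomial a l₁ k * carMonomial a l₂ k := by
  simp [carMonomial]

theorem carOddCount_cons (x : Γ) (l : List Γ) (k : Γ → Fin 4) :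
    carOddCount (x :: l) k = carFactorDegree (k x) + carOddCount l k := by
  simp [carOddCount, List.countP_cons, carFactorDegree, add_comm]

theorem carOddCount_append (l₁ l₂ : List Γ) (k : Γ → Fin 4) :
    carOddCount (l₁ ++ l₂) k = carOddCount l₁ k + carOddCount l₂ k :=
  List.countP_append

theorem carMonomial_congr {l : List Γ} {k k' : Γ → Fin 4} (h : ∀ x ∈ l, k x = k' x) :
    carMonomial a l k = carMonomial a l k' :=
  congrArg List.prod (List.map_congr_left fun x hx => by rw [h x hx])

theorem carOddCount_congr {l : List Γ} {k k' : Γ → Fin 4} (h : ∀ x ∈ l, k x = k' x) :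
    carOddCount l k = carOddCount l k' :=
  List.countP_congr fun x hx => by rw [h x hx]

theorem carMonomial_eq_one {l : List Γ} {k : Γ → Fin 4} (h : ∀ x ∈ l, k x = 0) :
    carMonomial a l k = 1 :=
  List.prod_eq_one (by simp +contextual [h, carFactor])

theorem carOddCount_eq_zero {l : List Γ} {k : Γ → Fin 4} (h : ∀ x ∈ l, k x = 0) :
    carOddCount l k = 0 :=
  List.countP_eq_zero.2 (by simp +contextual [h])

theorem mul_carFactor_of_anticommute {z : A} {x : Γ} (hα : z * a x = -(a x * z))
    (hσ : z * star (a x) = -(star (a x) * z)) (j : Fin 4) :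
    z * carFactor a j x = (-1 : ℤ) ^ carFactorDegree j • (carFactor a j x * z) := by
  fin_cases j
  · simp [carFactor, carFactorDegree]
  · simp [carFactor, carFactorDegree, hα]
  · simp [carFactor, carFactorDegree, hσ]
  · simp only [carFactor, carFactorDegree]
    rw [← mul_assoc, hσ, neg_mul, mul_assoc, hα, mul_neg, neg_neg]
    simp [mul_assoc]

theorem mul_carMonomial_of_anticommute {z : A} (k : Γ → Fin 4) {l : List Γ}
    (hz : ∀ x ∈ l, z * a x = -(a x * z) ∧ z * star (a x) = -(star (a x) * z)) :
    z * carMonomial a l k = (-1 : ℤ) ^ carOddCount l k • (carMonomial a l k * z) := by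
  induction l with
  | nil => simp [carMonomial, carOddCount]
  | cons x l ih =>
    obtain ⟨hα, hσ⟩ := hz x List.mem_cons_self
    rw [carMonomial_cons, carOddCount_cons]
    exact mul_mul_eq_neg_one_pow_smul (mul_carFactor_of_anticommute hα hσ _)
      (ih fun x hx => hz x (List.mem_cons_of_mem _ hx))

variable [Algebra ℂ A]

theorem carSpanEven_mono {X Λ : Finset Γ} (hXΛ : X ⊆ Λ) : carSpanEven a X ≤ carSpanEven a Λ := by
  refine Submodule.span_le.2 ?_
  rintro _ ⟨l, k, hl, rfl, he, rfl⟩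
  set l' := (Λ \ l.toFinset).toList
  have hl' : ∀ x ∈ l', x ∉ l := by simp [l']
  set k' : Γ → Fin 4 := fun x => if x ∈ l then k x else 0
  have hk : ∀ x ∈ l, k x = k' x := fun x hx => (if_pos hx).symm
  have hk' : ∀ x ∈ l', k' x = 0 := fun x hx => if_neg (hl' x hx)
  refine Submodule.subset_span ⟨l ++ l', k', ?_, ?_, ?_, ?_⟩
  · exact List.nodup_append.2 ⟨hl, Finset.nodup_toList _,
      fun x hx y hy hxy => hl' y hy (hxy ▸ hx)⟩
  · rw [List.toFinset_append, Finset.toList_toFinset, Finset.union_sdiff_of_subset hXΛ]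
  · rwa [carOddCount_append, ← carOddCount_congr hk, carOddCount_eq_zero hk', add_zero]
  · rw [carMonomial_append, ← carMonomial_congr hk, carMonomial_eq_one hk', mul_one]

end Monomials

section CAR

variable {Γ A : Type*} [Ring A] [StarRing A] {a : Γ → A}

theorem IsCAR.mul_star_mul (h : IsCAR a) (x : Γ) (z : A) :
    a x * (star (a x) * z) = z - star (a x) * (a x * z) := by
  have hx : a x * star (a x) + star (a x) * a x = 1 := by simpa using h.2.2 x x
  rw [← mul_assoc, eq_sub_of_add_eq hx, sub_mul, one_mul, mul_assoc]

theorem IsCAR.mul_star (h : IsCAR a) (x : Γ) : a x * star (a x) = 1 - star (a x) * a x := by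
  simpa using h.mul_star_mul x 1

theorem IsCAR.anticommute_of_ne (h : IsCAR a) {x y : Γ} (hxy : x ≠ y) :
    (a y * a x = -(a x * a y) ∧ a y * star (a x) = -(star (a x) * a y)) ∧
      (star (a y) * a x = -(a x * star (a y)) ∧
        star (a y) * star (a x) = -(star (a x) * star (a y))) := by
  have hyx := h.2.2 y x
  have hxy' := h.2.2 x y
  rw [if_neg hxy.symm] at hyx
  rw [if_neg hxy] at hxy'
  exact ⟨⟨eq_neg_of_add_eq_zero_left (h.1 y x), eq_neg_of_add_eq_zero_left hyx⟩,
    eq_neg_of_add_eq_zero_right hxy', eq_neg_of_add_eq_zero_left (h.2.1 y x)⟩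

theorem IsCAR.mul_carMonomial_of_not_mem (h : IsCAR a) {y : Γ} {l : List Γ} (hy : y ∉ l)
    (k : Γ → Fin 4) :
    a y * carMonomial a l k = (-1 : ℤ) ^ carOddCount l k • (carMonomial a l k * a y) ∧
      star (a y) * carMonomial a l k =
        (-1 : ℤ) ^ carOddCount l k • (carMonomial a l k * star (a y)) := by
  have hsites := fun x (hx : x ∈ l) => h.anticommute_of_ne (ne_of_mem_of_not_mem hx hy)
  exact ⟨mul_carMonomial_of_anticommute k fun x hx => (hsites x hx).1,
    mul_carMonomial_of_anticommute k fun x hx => (hsites x hx).2⟩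

variable [Algebra ℂ A]

theorem IsCAR.mul_self (h : IsCAR a) (x : Γ) : a x * a x = 0 := by
  have h2 : (2 : ℂ) • (a x * a x) = 0 := by rw [two_smul]; exact h.1 x x
  exact (smul_eq_zero.1 h2).resolve_left two_ne_zero

theorem IsCAR.star_mul_star_mul_self (h : IsCAR a) (x : Γ) (z : A) :
    star (a x) * (star (a x) * z) = 0 := by
  rw [← mul_assoc, ← star_mul, h.mul_self, star_zero, zero_mul]

theorem IsCAR.commute_of_mem_carSpanEven (h : IsCAR a) {y : Γ} {X : Finset Γ} (hy : y ∉ X)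
    {B : A} (hB : B ∈ carSpanEven a X) : Commute (a y) B ∧ Commute (star (a y)) B := by
  have hle : carSpanEven a X ≤
      Subalgebra.toSubmodule (Subalgebra.centralizer ℂ {a y, star (a y)}) := by
    refine Submodule.span_le.2 ?_
    rintro _ ⟨l, k, -, rfl, he, rfl⟩
    obtain ⟨hα, hσ⟩ := h.mul_carMonomial_of_not_mem (by simpa using hy) k
    rw [he.neg_one_pow, one_smul] at hα hσ
    simp [Set.mem_centralizer_iff, hα, hσ]
  have hcomm := (Subalgebra.mem_centralizer_iff ℂ).1 (hle hB)
  exact ⟨hcomm _ (by simp), hcomm _ (by simp)⟩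

end CAR

section SiteCondExp

variable {Γ A : Type*} [Ring A] [StarRing A] [Algebra ℂ A] {a : Γ → A}

variable (a) in
noncomputable def siteCondExp (y : Γ) : A →ₗ[ℂ] A :=
  (4 : ℂ)⁻¹ • ∑ j : Fin 4, LinearMap.mulLeftRight ℂ (star (uFactor a j y), uFactor a j y)

variable (a) in
noncomputable def twistedSiteAverage (y : Γ) (e : ℤ) (B : A) : A :=
  (2 : ℂ)⁻¹ • (star (a y) * a y * B * (star (a y) * a y) +
    (1 - star (a y) * a y) * B * (1 - star (a y) * a y) +
    e • (star (a y) * B * a y + a y * B * star (a y)))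

/-- The normalized trace, on the two-dimensional space of a single site, of `carFactor a j x`. -/
noncomputable def carFactorTrace : Fin 4 → ℂ
  | 0 => 1
  | 1 => 0
  | 2 => 0
  | 3 => 2⁻¹

theorem carFactorDegree_eq_zero_of_carFactorTrace_ne_zero {j : Fin 4}
    (hj : carFactorTrace j ≠ 0) : carFactorDegree j = 0 := by
  fin_cases j <;> simp_all [carFactorTrace, carFactorDegree]

theorem siteCondExp_apply (y : Γ) (B : A) :
    siteCondExp a y B = (4 : ℂ)⁻¹ • ∑ j : Fin 4, star (uFactor a j y) * B * uFactor a j y := by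
  simp [siteCondExp]

theorem siteCondExp_eq_twistedSiteAverage (y : Γ) (B : A) :
    siteCondExp a y B = twistedSiteAverage a y 1 B := by
  have hsum : ∑ j : Fin 4, star (uFactor a j y) * B * uFactor a j y =
      (2 : ℂ) • (star (a y) * a y * B * (star (a y) * a y) +
        (1 - star (a y) * a y) * B * (1 - star (a y) * a y) +
        (star (a y) * B * a y + a y * B * star (a y))) := by
    simp only [Fin.sum_univ_four, uFactor, star_add, star_sub, star_mul, star_star, star_one,
      star_ofNat, two_smul]
    noncomm_ring
  rw [siteCondExp_apply, hsum, twistedSiteAverage, one_smul, smul_smul]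
  norm_num

theorem siteCondExp_mul_mul {y : Γ} {M₁ F M₂ : A} {m n : ℕ}
    (hα₁ : a y * M₁ = (-1 : ℤ) ^ m • (M₁ * a y))
    (hσ₁ : star (a y) * M₁ = (-1 : ℤ) ^ m • (M₁ * star (a y)))
    (hα₂ : a y * M₂ = (-1 : ℤ) ^ n • (M₂ * a y))
    (hσ₂ : star (a y) * M₂ = (-1 : ℤ) ^ n • (M₂ * star (a y))) :
    siteCondExp a y (M₁ * F * M₂) = M₁ * twistedSiteAverage a y ((-1) ^ (m + n)) F * M₂ := by
  have hp₁ := commute_mul_of_neg_one_pow_smul hσ₁ hα₁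
  have hp₂ := commute_mul_of_neg_one_pow_smul hσ₂ hα₂
  have hq₁ := (Commute.one_left M₁).sub_left hp₁
  have hq₂ := (Commute.one_left M₂).sub_left hp₂
  have hp := mul_mul_mul_eq_neg_one_pow_smul (F := F) (m := 0) (n := 0)
    (by simpa using hp₁.eq) (by simpa using hp₂.eq)
  have hq := mul_mul_mul_eq_neg_one_pow_smul (F := F) (m := 0) (n := 0)
    (by simpa using hq₁.eq) (by simpa using hq₂.eq)
  rw [siteCondExp_eq_twistedSiteAverage, twistedSiteAverage, twistedSiteAverage, hp, hq,
    mul_mul_mul_eq_neg_one_pow_smul hσ₁ hα₂, mul_mul_mul_eq_neg_one_pow_smul hα₁ hσ₂]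
  simp only [add_zero, pow_zero, one_smul, smul_add, mul_add, add_mul, mul_smul_comm,
    smul_mul_assoc]

theorem IsCAR.twistedSiteAverage_carFactor (h : IsCAR a) (x : Γ) (j : Fin 4) :
    twistedSiteAverage a x ((-1) ^ carFactorDegree j) (carFactor a j x) =
      carFactorTrace j • 1 := by
  obtain rfl | rfl | rfl | rfl : j = 0 ∨ j = 1 ∨ j = 2 ∨ j = 3 := by omega
  all_goals
    simp +decide only [twistedSiteAverage, carFactor, carFactorDegree, carFactorTrace, mul_sub,
      sub_mul, mul_one, one_mul, mul_assoc, h.star_mul_star_mul_self, h.mul_star_mul, h.mul_star,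
      h.mul_self, mul_zero, zero_mul, sub_zero, if_true, if_false]
    module

theorem IsCAR.siteCondExp_carMonomial (h : IsCAR a) {y : Γ} {l₁ l₂ : List Γ} (hy₁ : y ∉ l₁)
    (hy₂ : y ∉ l₂) {k : Γ → Fin 4} (he : Even (carOddCount (l₁ ++ y :: l₂) k)) :
    siteCondExp a y (carMonomial a (l₁ ++ y :: l₂) k) =
      carFactorTrace (k y) • carMonomial a (l₁ ++ l₂) k := by
  obtain ⟨hα₁, hσ₁⟩ := h.mul_carMonomial_of_not_mem hy₁ k
  obtain ⟨hα₂, hσ₂⟩ := h.mul_carMonomial_of_not_mem hy₂ k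
  have hsign :
      (-1 : ℤ) ^ (carOddCount l₁ k + carOddCount l₂ k) = (-1) ^ carFactorDegree (k y) := by
    rw [carOddCount_append, carOddCount_cons, Nat.even_iff] at he
    rw [neg_one_pow_eq_pow_mod_two, neg_one_pow_eq_pow_mod_two (carFactorDegree _)]
    congr 1
    omega
  rw [carMonomial_append, carMonomial_cons, carMonomial_append, ← mul_assoc,
    siteCondExp_mul_mul hα₁ hσ₁ hα₂ hσ₂, hsign, h.twistedSiteAverage_carFactor, mul_smul_comm,
    mul_one, smul_mul_assoc]

theorem IsCAR.siteCondExp_eq_self (h : IsCAR a) {y : Γ} {B : A} (hα : Commute (a y) B)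
    (hσ : Commute (star (a y)) B) : siteCondExp a y B = B := by
  have hB := siteCondExp_mul_mul (a := a) (y := y) (M₁ := B) (F := 1) (M₂ := 1) (m := 0) (n := 0)
    (by simpa using hα.eq) (by simpa using hσ.eq) (by simp) (by simp)
  have h₁ := h.twistedSiteAverage_carFactor y 0
  simp [carFactorDegree, carFactor, carFactorTrace] at h₁
  simpa [h₁] using hB

theorem IsCAR.map_siteCondExp_carSpanEven_le (h : IsCAR a) (y : Γ) (Λ : Finset Γ) :
    (carSpanEven a Λ).map (siteCondExp a y) ≤ carSpanEven a (Λ.erase y) := by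
  rw [carSpanEven, Submodule.map_span_le]
  rintro _ ⟨l, k, hl, rfl, he, rfl⟩
  by_cases hy : y ∈ l
  swap
  · have hmem : carMonomial a l k ∈ carSpanEven a l.toFinset :=
      Submodule.subset_span ⟨l, k, hl, rfl, he, rfl⟩
    have hyl : y ∉ l.toFinset := by simpa using hy
    obtain ⟨hα, hσ⟩ := h.commute_of_mem_carSpanEven hyl hmem
    rwa [h.siteCondExp_eq_self hα hσ, Finset.erase_eq_of_notMem hyl]
  obtain ⟨l₁, l₂, rfl⟩ := List.append_of_mem hy
  obtain ⟨hy₁₂, hl₁₂⟩ := List.nodup_cons.1 (List.nodup_middle.1 hl)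
  rw [List.mem_append, not_or] at hy₁₂
  rw [h.siteCondExp_carMonomial hy₁₂.1 hy₁₂.2 he, List.toFinset_eq_of_perm _ _ List.perm_middle,
    List.toFinset_cons, Finset.erase_insert (by simpa using hy₁₂)]
  by_cases htr : carFactorTrace (k y) = 0
  · simp [htr]
  refine Submodule.smul_mem _ _ (Submodule.subset_span ⟨l₁ ++ l₂, k, hl₁₂, rfl, ?_, rfl⟩)
  rwa [carOddCount_append, carOddCount_cons,
    carFactorDegree_eq_zero_of_carFactorTrace_ne_zero htr, zero_add, ← carOddCount_append] at he

end SiteCondExp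

section CondExp

variable {Γ A : Type*} [Ring A] [StarRing A] {a : Γ → A}

theorem uProd_cons (y : Γ) (l : List Γ) (j : Fin 4) (β : Fin l.length → Fin 4) :
    uProd a (y :: l) (Fin.cons j β) = uFactor a j y * uProd a l β := by
  simp [uProd, List.ofFn_succ]

variable [Algebra ℂ A]

theorem condExp_nil (B : A) : condExp a [] B = B := by
  simp [condExp, uProd]

theorem condExp_cons (y : Γ) (l : List Γ) (B : A) :
    condExp a (y :: l) B = condExp a l (siteCondExp a y B) := by
  have hsum : ∑ α : Fin (l.length + 1) → Fin 4, star (uProd a (y :: l) α) * B * uProd a (y :: l) α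
      = ∑ β : Fin l.length → Fin 4,
          star (uProd a l β) * (∑ j : Fin 4, star (uFactor a j y) * B * uFactor a j y) *
            uProd a l β := by
    rw [← (Fin.consEquiv fun _ => Fin 4).sum_comp, Fintype.sum_prod_type, Finset.sum_comm]
    refine Finset.sum_congr rfl fun β _ => ?_
    rw [Finset.mul_sum, Finset.sum_mul]
    refine Finset.sum_congr rfl fun j _ => ?_
    rw [show (Fin.consEquiv fun _ => Fin 4) (j, β) = Fin.cons j β from rfl, uProd_cons, star_mul]
    simp only [mul_assoc]
  simp only [condExp, siteCondExp_apply, List.length_cons, hsum, mul_smul_comm, smul_mul_assoc,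
    ← Finset.smul_sum, smul_smul, pow_succ, mul_inv]

theorem IsCAR.condExp_mem_carSpanEven_sdiff (h : IsCAR a) (l : List Γ) {Λ : Finset Γ} {B : A}
    (hB : B ∈ carSpanEven a Λ) : condExp a l B ∈ carSpanEven a (Λ \ l.toFinset) := by
  induction l generalizing Λ B with
  | nil => simpa [condExp_nil] using hB
  | cons y l ih =>
    rw [condExp_cons, List.toFinset_cons, Finset.sdiff_insert, ← Finset.erase_sdiff_comm]
    exact ih (h.map_siteCondExp_carSpanEven_le y Λ ⟨B, hB, rfl⟩)

theorem IsCAR.condExp_eq_self_of_mem_carSpanEven (h : IsCAR a) {X : Finset Γ} {l : List Γ}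
    (hl : ∀ y ∈ l, y ∉ X) {B : A} (hB : B ∈ carSpanEven a X) : condExp a l B = B := by
  induction l with
  | nil => exact condExp_nil B
  | cons y l ih =>
    obtain ⟨hα, hσ⟩ := h.commute_of_mem_carSpanEven (hl y List.mem_cons_self) hB
    rw [condExp_cons, h.siteCondExp_eq_self hα hσ, ih fun x hx => hl x (List.mem_cons_of_mem _ hx)]

end CondExp

theorem condExp_maps_even_onto_even_general
    {Γ A : Type*} [DecidableEq Γ]
    [NormedRing A] [StarRing A] [NormedAlgebra ℂ A]
    (a : Γ → A) (hCAR : IsCAR a)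
    (X Λ : Finset Γ) (hXΛ : X ⊆ Λ)
    (l : List Γ) (hlset : l.toFinset = Λ \ X) :
    (∀ B ∈ carSpanEven a Λ, condExp a l B ∈ carSpanEven a X) ∧
    (∀ B ∈ carSpanEven a X, condExp a l B = B) ∧
    condExp a l '' (carSpanEven a Λ : Set A) = (carSpanEven a X : Set A) := by
  -- `hlset` uses the given instance, the lemmas above the classical one
  obtain rfl : ‹DecidableEq Γ› = fun _ _ => Classical.propDecidable _ := Subsingleton.elim _ _
  have hmaps : ∀ B ∈ carSpanEven a Λ, condExp a l B ∈ carSpanEven a X := fun B hB => by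
    simpa [hlset, Finset.sdiff_sdiff_eq_self hXΛ] using hCAR.condExp_mem_carSpanEven_sdiff l hB
  have hfix : ∀ B ∈ carSpanEven a X, condExp a l B = B := fun B =>
    hCAR.condExp_eq_self_of_mem_carSpanEven fun y hy =>
      (Finset.mem_sdiff.1 (hlset ▸ List.mem_toFinset.2 hy)).2
  exact ⟨hmaps, hfix, (Set.image_subset_iff.2 hmaps).antisymm
    fun B hB => ⟨B, carSpanEven_mono hXΛ hB, hfix B hB⟩⟩

/-- `𝔼_X^Λ` maps the even subalgebra `𝔄_Λ⁺` onto the even local subalgebra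
`𝔄_X⁺`: `𝔼_X^Λ(B) ∈ 𝔄_X⁺` for `B ∈ 𝔄_Λ⁺`, `𝔼_X^Λ(B) = B` for `B ∈ 𝔄_X⁺`, and hence
`𝔼_X^Λ(𝔄_Λ⁺) = 𝔄_X⁺`. -/
theorem condExp_maps_even_onto_even
    {Γ A : Type*} [DecidableEq Γ]
    [NormedRing A] [StarRing A] [CStarRing A] [NormedAlgebra ℂ A]
    (a : Γ → A) (hCAR : IsCAR a)
    (X Λ : Finset Γ) (hXΛ : X ⊆ Λ)
    (l : List Γ) (hl : l.Nodup) (hlset : l.toFinset = Λ \ X) :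
    (∀ B ∈ carSpanEven a Λ, condExp a l B ∈ carSpanEven a X) ∧
    (∀ B ∈ carSpanEven a X, condExp a l B = B) ∧
    condExp a l '' (carSpanEven a Λ : Set A) = (carSpanEven a X : Set A) :=
  condExp_maps_even_onto_even_general a hCAR X Λ hXΛ l hlset
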